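/- Under the assumptions of the previous estimate, if additionally M := sup_{t≥0} ∫₀ᵗ γ(ξ)dξ < ∞, then g is bounded: g(t) ≤ e^M (M₃^{1/(p−1)} − ω) for all t ≥ 0, where M₃ := 1 / [ (g(0)+ω)^{1−p} − (p−1)∫₀^∞ α(ξ)/ν(ξ)^{p−1} dξ ]. -/

import Mathlib

/-!
With the integrating factor `ν = exp (-∫₀ᵗ γ)`, the function `φ = ν g + ω` satisfies
`φ' = ν (g' - γ g) ≤ ν (α g ^ p + β) ≤ (α / ν ^ (p - 1)) φ ^ p` almost everywhere: the term
`ν β` is absorbed into `(α / ν ^ (p - 1)) ω ^ p` by `β ν ^ p ≤ ω ^ p α`, and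
`x ^ p + y ^ p ≤ (x + y) ^ p`. Hence `(φ ^ (1 - p))' ≥ -(p - 1) α / ν ^ (p - 1)`, and integrating
gives `φ(t) ^ (1 - p) ≥ 1 / M₃ > 0`, i.e. `ν g ≤ M₃ ^ (1 / (p - 1)) - ω`; finally `1 / ν ≤ e ^ M`.

Since `γ` is only locally integrable, `ν` is merely absolutely continuous, so the integration
is the fundamental theorem of calculus for absolutely continuous functions. The function `g`
is absolutely continuous because its derivative is bounded above by an integrable function:
then `∫ (γ g + α g ^ p + β) - g` is monotone, so `g'` is integrable.
-/

open MeasureTheory intervalIntegral Real Filter Set NNReal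

theorem LipschitzOnWith.comp_absolutelyContinuousOnInterval {X Y : Type*} [PseudoMetricSpace X]
    [PseudoMetricSpace Y] {F : X → Y} {f : ℝ → X} {s : Set X} {K : ℝ≥0} {a b : ℝ}
    (hF : LipschitzOnWith K F s) (hf : AbsolutelyContinuousOnInterval f a b)
    (hfs : MapsTo f (uIcc a b) s) : AbsolutelyContinuousOnInterval (F ∘ f) a b := by
  have hKf := Tendsto.const_mul (K : ℝ) (hf : AbsolutelyContinuousOnInterval f a b)
  rw [mul_zero] at hKf
  refine squeeze_zero' (Eventually.of_forall fun _ ↦ Finset.sum_nonneg fun _ _ ↦ dist_nonneg)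
    ?_ hKf
  filter_upwards [mem_inf_of_right (mem_principal_self _)] with E hE
  rw [Finset.mul_sum]
  exact Finset.sum_le_sum fun i hi ↦ hF.dist_le_mul _ (hfs (hE.1 i hi).1) _ (hfs (hE.1 i hi).2)

theorem ContDiffOn.comp_absolutelyContinuousOnInterval {F f : ℝ → ℝ} {a b : ℝ}
    (hF : ContDiffOn ℝ 1 F (f '' uIcc a b)) (hf : AbsolutelyContinuousOnInterval f a b) :
    AbsolutelyContinuousOnInterval (F ∘ f) a b := by
  have hcompact : IsCompact (f '' uIcc a b) := isCompact_uIcc.image_of_continuousOn hf.continuousOn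
  have hconvex : Convex ℝ (f '' uIcc a b) :=
    (isPreconnected_uIcc.image f hf.continuousOn).ordConnected.convex
  obtain ⟨K, hK⟩ := hF.exists_lipschitzOnWith one_ne_zero hconvex hcompact
  exact hK.comp_absolutelyContinuousOnInterval hf (mapsTo_image f _)

theorem AbsolutelyContinuousOnInterval.congr {X : Type*} [PseudoMetricSpace X] {f g : ℝ → X}
    {a b : ℝ} (hf : AbsolutelyContinuousOnInterval f a b) (hfg : EqOn f g (uIcc a b)) :
    AbsolutelyContinuousOnInterval g a b := by
  refine (hf : AbsolutelyContinuousOnInterval f a b).congr' ?_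
  filter_upwards [mem_inf_of_right (mem_principal_self _)] with E hE
  exact Finset.sum_congr rfl fun i hi ↦ by rw [hfg (hE.1 i hi).1, hfg (hE.1 i hi).2]

theorem AbsolutelyContinuousOnInterval.add_const {f : ℝ → ℝ} {a b : ℝ}
    (hf : AbsolutelyContinuousOnInterval f a b) (c : ℝ) :
    AbsolutelyContinuousOnInterval (fun x ↦ f x + c) a b := by
  simpa only [AbsolutelyContinuousOnInterval, dist_add_right] using hf

theorem monotoneOn_integral_sub_of_deriv_le {f h : ℝ → ℝ} {a b : ℝ}
    (hf : ∀ x ∈ uIcc a b, DifferentiableAt ℝ f x) (hh : IntervalIntegrable h volume a b)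
    (hle : ∀ x ∈ uIcc a b, deriv f x ≤ h x) :
    MonotoneOn (fun x ↦ (∫ y in a..x, h y) - f x) (uIcc a b) := by
  intro x hx y hy hxy
  have hsub : uIcc x y ⊆ uIcc a b := uIcc_subset_uIcc hx hy
  have hsub' : Icc x y ⊆ uIcc a b := by rwa [← uIcc_of_le hxy]
  have hf_inc : f y - f x ≤ ∫ z in x..y, h z :=
    sub_le_integral_of_hasDeriv_right_of_le hxy
      (fun z hz ↦ (hf z (hsub' hz)).continuousAt.continuousWithinAt)
      (fun z hz ↦ (hf z (hsub' (Ioo_subset_Icc_self hz))).hasDerivAt.hasDerivWithinAt)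
      ((intervalIntegrable_iff_integrableOn_Icc_of_le hxy).mp (hh.mono_set hsub))
      (fun z hz ↦ hle z (hsub' (Ioo_subset_Icc_self hz)))
  have hsplit : (∫ z in a..y, h z) - ∫ z in a..x, h z = ∫ z in x..y, h z :=
    integral_interval_sub_left (hh.mono_set (uIcc_subset_uIcc left_mem_uIcc hy))
      (hh.mono_set (uIcc_subset_uIcc left_mem_uIcc hx))
  linarith

theorem absolutelyContinuousOnInterval_of_deriv_le {f h : ℝ → ℝ} {a b : ℝ}
    (hf : ∀ x ∈ uIcc a b, DifferentiableAt ℝ f x) (hh : IntervalIntegrable h volume a b)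
    (hle : ∀ x ∈ uIcc a b, deriv f x ≤ h x) : AbsolutelyContinuousOnInterval f a b := by
  have hG := monotoneOn_integral_sub_of_deriv_le hf hh hle
  have hf' : IntervalIntegrable (deriv f) volume a b := by
    refine (hh.sub hG.intervalIntegrable_deriv).congr_ae ?_
    filter_upwards [ae_restrict_of_ae hh.ae_hasDerivAt_integral,
      ae_restrict_mem measurableSet_uIoc] with x hH hx
    have hx' := uIoc_subset_uIcc hx
    rw [((hH hx' a left_mem_uIcc).fun_sub (hf x hx').hasDerivAt).deriv]
    ring
  refine ((hf'.absolutelyContinuousOnInterval_intervalIntegral left_mem_uIcc).add_const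
    (f a)).congr fun x hx ↦ ?_
  have hsub : uIcc a x ⊆ uIcc a b := uIcc_subset_uIcc left_mem_uIcc hx
  have hFTC : ∫ y in a..x, deriv f y = f x - f a :=
    integral_eq_sub_of_hasDerivAt (fun y hy ↦ (hf y (hsub hy)).hasDerivAt) (hf'.mono_set hsub)
  simp [hFTC]

theorem rpow_one_sub_sub_integral_le_of_deriv_le {φ A : ℝ → ℝ} {a b p : ℝ} (hab : a ≤ b)
    (hp : 1 ≤ p) (hφ : AbsolutelyContinuousOnInterval φ a b) (hpos : ∀ x ∈ uIcc a b, 0 < φ x)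
    (hA : IntervalIntegrable A volume a b)
    (hderiv : ∀ᵐ x, x ∈ uIcc a b → deriv φ x ≤ A x * φ x ^ p) :
    φ a ^ (1 - p) - (p - 1) * ∫ x in a..b, A x ≤ φ b ^ (1 - p) := by
  have hψ : AbsolutelyContinuousOnInterval (fun x ↦ φ x ^ (1 - p)) a b := by
    refine ContDiffOn.comp_absolutelyContinuousOnInterval (F := fun y ↦ y ^ (1 - p)) ?_ hφ
    rintro _ ⟨x, hx, rfl⟩
    exact (contDiffAt_rpow_const_of_ne (hpos x hx).ne').contDiffWithinAt
  have hψ' : ∀ᵐ x ∂volume.restrict (Icc a b), (1 - p) * A x ≤ deriv (fun x ↦ φ x ^ (1 - p)) x := by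
    rw [← uIcc_of_le hab]
    filter_upwards [ae_restrict_of_ae hderiv, ae_restrict_of_ae hφ.ae_differentiableAt,
      ae_restrict_mem measurableSet_uIcc] with x hle hdiff hx
    have hφx := hpos x hx
    rw [((hdiff hx).hasDerivAt.rpow_const (Or.inl hφx.ne')).deriv]
    have hcancel : φ x ^ p * φ x ^ (1 - p - 1) = 1 := by
      rw [← rpow_add hφx]; simp
    have : deriv φ x * φ x ^ (1 - p - 1) ≤ A x :=
      calc deriv φ x * φ x ^ (1 - p - 1) ≤ A x * φ x ^ p * φ x ^ (1 - p - 1) := by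
            gcongr; exact hle hx
        _ = A x := by rw [mul_assoc, hcancel, mul_one]
    calc (1 - p) * A x ≤ (1 - p) * (deriv φ x * φ x ^ (1 - p - 1)) :=
          mul_le_mul_of_nonpos_left this (by linarith)
      _ = deriv φ x * (1 - p) * φ x ^ (1 - p - 1) := by ring
  have := integral_mono_ae_restrict hab (hA.const_mul (1 - p)) hψ.intervalIntegrable_deriv hψ'
  rw [hψ.integral_deriv_eq_sub, intervalIntegral.integral_const_mul] at this
  linarith

theorem Real.le_one_div_rpow_of_le_rpow_one_sub {y c p : ℝ} (hp : 1 < p) (hy : 0 < y)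
    (hc : 0 < c) (h : c ≤ y ^ (1 - p)) : y ≤ (1 / c) ^ (1 / (p - 1)) := by
  have hp1 : 0 < p - 1 := by linarith
  have hyp : y ^ (p - 1) ≤ 1 / c := by
    rwa [le_one_div (by positivity) hc, one_div, ← rpow_neg hy.le, neg_sub]
  calc y = (y ^ (p - 1)) ^ (1 / (p - 1)) := by
        rw [← rpow_mul hy.le, mul_one_div_cancel hp1.ne', rpow_one]
    _ ≤ (1 / c) ^ (1 / (p - 1)) := by gcongr

theorem mul_sub_le_div_rpow_mul_add_rpow {ν g ω p α β γ d : ℝ} (hν : 0 < ν) (hg : 0 ≤ g)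
    (hω : 0 ≤ ω) (hp : 1 ≤ p) (hα : 0 ≤ α) (hsmall : β * ν ^ p ≤ ω ^ p * α)
    (hd : d ≤ γ * g + α * g ^ p + β) :
    ν * (d - γ * g) ≤ α / ν ^ (p - 1) * (ν * g + ω) ^ p := by
  set q := ν ^ (p - 1)
  have hq : 0 < q := rpow_pos_of_pos hν _
  have hνp : ν ^ p = ν * q := by
    rw [← rpow_one_add' hν.le (by linarith), add_sub_cancel]
  have hpow : ν * (α * g ^ p) = α / q * (ν * g) ^ p := by
    rw [mul_rpow hν.le hg, hνp]
    field_simp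
  have hβ : ν * β ≤ α / q * ω ^ p := by
    rw [div_mul_eq_mul_div, le_div_iff₀ hq]
    linarith [hνp ▸ hsmall]
  calc ν * (d - γ * g) ≤ ν * (α * g ^ p + β) := by gcongr; linarith
    _ ≤ α / q * (ν * g) ^ p + α / q * ω ^ p := by rw [mul_add, hpow]; gcongr
    _ = α / q * ((ν * g) ^ p + ω ^ p) := by ring
    _ ≤ α / q * (ν * g + ω) ^ p := by
        gcongr
        exact add_rpow_le_rpow_add (by positivity) hω hp

noncomputable def integratingFactor (γ : ℝ → ℝ) (t : ℝ) : ℝ :=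
  exp (-∫ ξ in (0:ℝ)..t, γ ξ)

namespace integratingFactor

variable {g γ α β : ℝ → ℝ} {p ω t : ℝ}

theorem pos (x : ℝ) : 0 < integratingFactor γ x := exp_pos _

theorem zero : integratingFactor γ 0 = 1 := by simp [integratingFactor]

theorem absolutelyContinuousOnInterval (hγ : IntervalIntegrable γ volume 0 t) :
    AbsolutelyContinuousOnInterval (integratingFactor γ) 0 t :=
  contDiff_exp.contDiffOn.comp_absolutelyContinuousOnInterval
    (hγ.absolutelyContinuousOnInterval_intervalIntegral left_mem_uIcc).fun_neg

theorem ae_hasDerivAt (hγ : IntervalIntegrable γ volume 0 t) :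
    ∀ᵐ x, x ∈ uIcc 0 t → HasDerivAt (integratingFactor γ) (-γ x * integratingFactor γ x) x := by
  filter_upwards [hγ.ae_hasDerivAt_integral] with x hx hxmem
  rw [mul_comm]
  exact (hx hxmem 0 left_mem_uIcc).neg.exp

theorem ae_deriv_mul_add_le (hp : 1 ≤ p) (hω : 0 ≤ ω) (hγ : IntervalIntegrable γ volume 0 t)
    (hαpos : ∀ x, 0 ≤ α x) (hg0 : ∀ x ∈ uIcc 0 t, 0 ≤ g x) (hgdiff : Differentiable ℝ g)
    (hineq : ∀ x ∈ uIcc 0 t, deriv g x ≤ γ x * g x + α x * g x ^ p + β x)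
    (hsmall : ∀ x ∈ uIcc 0 t, β x * integratingFactor γ x ^ p ≤ ω ^ p * α x) :
    ∀ᵐ x, x ∈ uIcc 0 t → deriv (fun s ↦ integratingFactor γ s * g s + ω) x ≤
      α x / integratingFactor γ x ^ (p - 1) * (integratingFactor γ x * g x + ω) ^ p := by
  filter_upwards [ae_hasDerivAt hγ] with x hν hx
  rw [(((hν hx).fun_mul (hgdiff x).hasDerivAt).add_const ω).deriv]
  calc _ = integratingFactor γ x * (deriv g x - γ x * g x) := by ring
    _ ≤ _ := mul_sub_le_div_rpow_mul_add_rpow (pos x) (hg0 x hx) hω hp (hαpos x)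
        (hsmall x hx) (hineq x hx)

theorem rpow_one_sub_sub_integral_le (ht : 0 ≤ t) (hp : 1 ≤ p) (hω : 0 < ω)
    (hγ : IntervalIntegrable γ volume 0 t) (hα : IntervalIntegrable α volume 0 t)
    (hβ : IntervalIntegrable β volume 0 t) (hαpos : ∀ x, 0 ≤ α x)
    (hg0 : ∀ x ∈ uIcc 0 t, 0 ≤ g x) (hgdiff : Differentiable ℝ g)
    (hineq : ∀ x ∈ uIcc 0 t, deriv g x ≤ γ x * g x + α x * g x ^ p + β x)
    (hsmall : ∀ x ∈ uIcc 0 t, β x * integratingFactor γ x ^ p ≤ ω ^ p * α x) :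
    (g 0 + ω) ^ (1 - p) - (p - 1) * ∫ x in 0..t, α x / integratingFactor γ x ^ (p - 1) ≤
      (integratingFactor γ t * g t + ω) ^ (1 - p) := by
  have hνAC := absolutelyContinuousOnInterval hγ
  have hgp : ContinuousOn (fun x ↦ g x ^ p) (uIcc 0 t) :=
    hgdiff.continuous.continuousOn.rpow_const fun _ _ ↦ Or.inr (by linarith)
  have hgAC : AbsolutelyContinuousOnInterval g 0 t :=
    absolutelyContinuousOnInterval_of_deriv_le (fun x _ ↦ hgdiff x)
      (((hγ.mul_continuousOn hgdiff.continuous.continuousOn).add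
        (hα.mul_continuousOn hgp)).add hβ) hineq
  have hA : IntervalIntegrable (fun x ↦ α x / integratingFactor γ x ^ (p - 1)) volume 0 t := by
    simp_rw [div_eq_mul_inv]
    exact hα.mul_continuousOn ((hνAC.continuousOn.rpow_const fun _ _ ↦ Or.inr (by linarith)).inv₀
      fun x _ ↦ (rpow_pos_of_pos (pos x) _).ne')
  have hφ := rpow_one_sub_sub_integral_le_of_deriv_le ht hp ((hνAC.fun_mul hgAC).add_const ω)
    (fun x hx ↦ by have := hg0 x hx; have := pos (γ := γ) x; positivity) hA
    (ae_deriv_mul_add_le hp hω.le hγ hαpos hg0 hgdiff hineq hsmall)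
  simpa only [zero, one_mul] using hφ

end integratingFactor

theorem boundedness_thm23_general
    (g γ α β ν : ℝ → ℝ) (p ω M : ℝ) (hp : 1 < p) (hω : 0 < ω)
    (hγ : LocallyIntegrable γ) (hα : LocallyIntegrable α) (hβ : LocallyIntegrable β)
    (hαpos : ∀ t, 0 ≤ α t)
    (hg0 : ∀ t ≥ 0, 0 ≤ g t) (hgdiff : Differentiable ℝ g)
    (hineq : ∀ t ≥ 0, deriv g t ≤ γ t * g t + α t * g t ^ p + β t)
    (hν : ∀ t, ν t = Real.exp (-∫ ξ in (0:ℝ)..t, γ ξ))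
    (hsmall : ∀ t ≥ 0, β t * ν t ^ p ≤ ω ^ p * α t)
    (hαν : IntegrableOn (fun ξ => α ξ / ν ξ ^ (p - 1)) (Set.Ioi (0:ℝ)))
    (hinit : (p - 1) * (∫ ξ in Set.Ioi (0:ℝ), α ξ / ν ξ ^ (p - 1)) < (g 0 + ω) ^ (1 - p))
    (hM : ∀ t ≥ 0, (∫ ξ in (0:ℝ)..t, γ ξ) ≤ M) :
    ∀ t ≥ 0, g t ≤ Real.exp M *
      ((1 / ((g 0 + ω) ^ (1 - p) - (p - 1) * ∫ ξ in Set.Ioi (0:ℝ), α ξ / ν ξ ^ (p - 1)))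
        ^ (1 / (p - 1)) - ω) := by
  intro t ht
  obtain rfl : ν = integratingFactor γ := funext hν
  have hmem : ∀ x ∈ uIcc 0 t, 0 ≤ x := fun x hx ↦ (uIcc_of_le ht ▸ hx).1
  have hlocal {f : ℝ → ℝ} (hf : LocallyIntegrable f) : IntervalIntegrable f volume 0 t :=
    (hf.integrableOn_isCompact isCompact_uIcc).intervalIntegrable
  have hest := integratingFactor.rpow_one_sub_sub_integral_le ht hp.le hω (hlocal hγ) (hlocal hα)
    (hlocal hβ) hαpos (fun x hx ↦ hg0 x (hmem x hx)) hgdiff (fun x hx ↦ hineq x (hmem x hx))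
    (fun x hx ↦ hsmall x (hmem x hx))
  have htail : ∫ x in 0..t, α x / integratingFactor γ x ^ (p - 1) ≤
      ∫ x in Ioi 0, α x / integratingFactor γ x ^ (p - 1) := by
    rw [integral_of_le ht]
    exact setIntegral_mono_set hαν
      (ae_of_all _ fun x ↦ div_nonneg (hαpos x) (rpow_nonneg (integratingFactor.pos x).le _))
      Ioc_subset_Ioi_self.eventuallyLE
  have hνg : 0 ≤ integratingFactor γ t * g t := mul_nonneg (integratingFactor.pos t).le (hg0 t ht)
  have hlow : (g 0 + ω) ^ (1 - p) - (p - 1) * ∫ x in Ioi 0, α x / integratingFactor γ x ^ (p - 1)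
      ≤ (integratingFactor γ t * g t + ω) ^ (1 - p) :=
    le_trans (by gcongr) hest
  have hφ := Real.le_one_div_rpow_of_le_rpow_one_sub hp (by positivity) (by linarith) hlow
  calc g t = integratingFactor γ t * g t * exp (∫ ξ in (0:ℝ)..t, γ ξ) := by
        rw [integratingFactor, mul_comm (exp _), mul_assoc, ← exp_add]; simp
    _ ≤ _ := by
        rw [mul_comm (exp M)]
        exact mul_le_mul (by linarith) (exp_le_exp.mpr (hM t ht)) (exp_pos _).le (by linarith)

theorem boundedness_thm23
    (g γ α β ν : ℝ → ℝ) (p ω M : ℝ) (hp : 1 < p) (hω : 0 < ω)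
    (hγ : LocallyIntegrable γ) (hα : LocallyIntegrable α) (hβ : LocallyIntegrable β)
    (hαpos : ∀ t, 0 ≤ α t) (hβpos : ∀ t, 0 ≤ β t)
    (hg0 : ∀ t ≥ 0, 0 ≤ g t) (hgdiff : Differentiable ℝ g)
    (hineq : ∀ t ≥ 0, deriv g t ≤ γ t * g t + α t * g t ^ p + β t)
    (hν : ∀ t, ν t = Real.exp (-∫ ξ in (0:ℝ)..t, γ ξ))
    (hsmall : ∀ t ≥ 0, β t * ν t ^ p ≤ ω ^ p * α t)
    (hαν : IntegrableOn (fun ξ => α ξ / ν ξ ^ (p - 1)) (Set.Ioi (0:ℝ)))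
    (hinit : (p - 1) * (∫ ξ in Set.Ioi (0:ℝ), α ξ / ν ξ ^ (p - 1)) < (g 0 + ω) ^ (1 - p))
    (hM : ∀ t ≥ 0, (∫ ξ in (0:ℝ)..t, γ ξ) ≤ M) :
    ∀ t ≥ 0, g t ≤ Real.exp M *
      ((1 / ((g 0 + ω) ^ (1 - p) - (p - 1) * ∫ ξ in Set.Ioi (0:ℝ), α ξ / ν ξ ^ (p - 1)))
        ^ (1 / (p - 1)) - ω) :=
  boundedness_thm23_general g γ α β ν p ω M hp hω hγ hα hβ hαpos hg0 hgdiff hineq hν hsmall hαν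
    hinit hM
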